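/- Let X be a first countable compact Hausdorff topological space with at least three points, let φ : C(X,ℂ) → C(X,ℂ) be a diameter preserving linear bijection, and let G' be the bijection of the collection of two-element subsets of X determined by G({x,y}) = {G'({x,y})}. Then there exists a bijection g : X → X such that G'({x,y}) = {g(x), g(y)} for every two-element subset {x,y} of X; moreover, for each x ∈ X, g(x) is the unique point of X belonging to G'({x,y}) for every y ∈ X with y ≠ x. -/

import Mathlib

/-- `S(f)`: the set of two-element subsets `{x,y}` of `X` with
`|f(x) - f(y)| = diam(f(X))`. -/
def diamSet {X : Type*} [TopologicalSpace X] (f : C(X, ℂ)) : Set (Set X) :=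
  {s | ∃ x y : X, x ≠ y ∧ s = {x, y} ∧
    ‖f x - f y‖ = Metric.diam (Set.range ⇑f)}

/-- `T(f)`: the set of triples `(x,y,u)` with `|f(x) - f(y)| = diam(f(X))` and
`u = f(x) - f(y)`. -/
def diamTriple {X : Type*} [TopologicalSpace X] (f : C(X, ℂ)) : Set (X × X × ℂ) :=
  {p | ‖f p.1 - f p.2.1‖ = Metric.diam (Set.range ⇑f) ∧
    p.2.2 = f p.1 - f p.2.1}

/-- `G(s) = ⋂ { S(φ(f)) : f ∈ C(X,ℂ), s ∈ S(f) }`. -/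
def Gset {X : Type*} [TopologicalSpace X] (φ : C(X, ℂ) → C(X, ℂ)) (s : Set X) :
    Set (Set X) :=
  {t | ∀ f : C(X, ℂ), s ∈ diamSet f → t ∈ diamSet (φ f)}

/-- `H(x,y,u) = ⋂ { T(φ(f)) : f ∈ C(X,ℂ), (x,y,u) ∈ T(f) }`. -/
def Hset {X : Type*} [TopologicalSpace X] (φ : C(X, ℂ) → C(X, ℂ)) (x y : X) (u : ℂ) :
    Set (X × X × ℂ) :=
  {p | ∀ f : C(X, ℂ), (x, y, u) ∈ diamTriple f → p ∈ diamTriple (φ f)}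

/-- `φ` is diameter preserving: `diam(φ(f)(X)) = diam(f(X))` for all `f`. -/
def DiamPreserving {X : Type*} [TopologicalSpace X] (φ : C(X, ℂ) → C(X, ℂ)) : Prop :=
  ∀ f : C(X, ℂ), Metric.diam (Set.range ⇑(φ f)) = Metric.diam (Set.range ⇑f)

/-- The collection of two-element subsets of `X`. -/
abbrev TwoSet (X : Type*) := {s : Set X // ∃ a b : X, a ≠ b ∧ s = {a, b}}

/-!
For `{p, q} = G'({x, y})` the functional `f ↦ φ f p - φ f q` is bounded by the diameter of `f`
and attains it at every `f` whose diameter is realised at `x, y`; such a functional is a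
unimodular multiple of `f ↦ f x - f y`.

For three distinct points the identity `(δₓ - δ_y) - (δₓ - δ_z) + (δ_y - δ_z) = 0` thus becomes a
linear relation between the three image dipoles `δ_p - δ_q`, which forces `G'({x, y})`,
`G'({x, z})`, `G'({y, z})` to have the shape `{P, Q}, {P, R}, {Q, R}`. Injectivity of `G'` then
makes all the sets `G'({x, y})`, `y ≠ x`, share one point, and that point is `g x`.
-/

open Set Metric

section Diameter

variable {X E : Type*} [TopologicalSpace X] [SeminormedAddCommGroup E]

lemma norm_sub_le_diam_range [CompactSpace X] (f : C(X, E)) (a b : X) :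
    ‖f a - f b‖ ≤ diam (range f) := by
  rw [← dist_eq_norm]
  exact dist_le_diam_of_mem (isCompact_range f.continuous).isBounded
    (mem_range_self a) (mem_range_self b)

lemma diam_range_le_of_norm_le (f : C(X, E)) {r : ℝ} (hr : 0 ≤ r) (hf : ∀ a, ‖f a‖ ≤ r) :
    diam (range f) ≤ 2 * r := by
  refine diam_le_of_forall_dist_le (by positivity) ?_
  rintro _ ⟨a, rfl⟩ _ ⟨b, rfl⟩
  rw [dist_eq_norm]
  linarith [norm_sub_le (f a) (f b), hf a, hf b]

end Diameter

section Urysohn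

variable {X : Type*} [TopologicalSpace X] [NormalSpace X] [T1Space X]

lemma exists_dipole {x y : X} (hxy : x ≠ y) {W : Set X} (hW : IsOpen W) (hx : x ∈ W)
    (hy : y ∈ W) :
    ∃ f : C(X, ℂ), f x = 1 ∧ f y = -1 ∧ (∀ a, ‖f a‖ ≤ 1) ∧ ∀ a ∉ W, f a = 0 := by
  have bump : ∀ {x y : X}, x ≠ y → x ∈ W → ∃ u : C(X, ℝ),
      EqOn u 0 (Wᶜ ∪ {y}) ∧ u x = 1 ∧ ∀ a, u a ∈ Icc (0 : ℝ) 1 := by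
    intro x y hxy hx
    obtain ⟨u, hu0, hu1, hu⟩ := exists_continuous_zero_one_of_isClosed
      (hW.isClosed_compl.union (isClosed_singleton (x := y))) (isClosed_singleton (x := x))
      (disjoint_singleton_right.2 (by simp [hx, hxy]))
    exact ⟨u, hu0, hu1 rfl, hu⟩
  obtain ⟨u, hu0, hux, hu⟩ := bump hxy hx
  obtain ⟨v, hv0, hvy, hv⟩ := bump hxy.symm hy
  refine ⟨⟨fun a => ((u a - v a : ℝ) : ℂ), by fun_prop⟩, ?_, ?_, fun a => ?_, fun a ha => ?_⟩
  · simp [hux, hv0 (Or.inr rfl)]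
  · simp [hvy, hu0 (Or.inr rfl)]
  · simp only [ContinuousMap.coe_mk, Complex.norm_real, Real.norm_eq_abs, abs_sub_le_iff]
    constructor <;> linarith [(hu a).1, (hu a).2, (hv a).1, (hv a).2]
  · simp [hu0 (Or.inl ha), hv0 (Or.inl ha)]

lemma mem_of_forall_dipole_combination_eq_zero {c₁ c₂ c₃ : ℂ} {p q r w m n : X} (hc₁ : c₁ ≠ 0)
    (hpq : p ≠ q)
    (h : ∀ H : C(X, ℂ), c₁ * (H p - H q) + c₂ * (H r - H w) + c₃ * (H m - H n) = 0) :
    p ∈ ({r, w, m, n} : Set X) := by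
  by_contra hp
  obtain ⟨u, hu0, hu1, -⟩ := exists_continuous_zero_one_of_isClosed
    (Set.toFinite {q, r, w, m, n}).isClosed (isClosed_singleton (x := p))
    (disjoint_singleton_right.2 (by simpa [hpq] using hp))
  simp only [EqOn, mem_insert_iff, mem_singleton_iff, forall_eq_or_imp, forall_eq] at hu0
  have := h ⟨fun a => (u a : ℂ), by fun_prop⟩
  simp [hu1 rfl, hu0, hc₁] at this

end Urysohn

structure IsDiamNorming {X : Type*} [TopologicalSpace X] (D : C(X, ℂ) →ₗ[ℂ] ℂ) (x y : X) :
    Prop where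
  norm_le : ∀ f : C(X, ℂ), ‖D f‖ ≤ diam (range f)
  norm_eq : ∀ f : C(X, ℂ), ‖f x - f y‖ = diam (range f) → ‖D f‖ = diam (range f)

namespace IsDiamNorming

variable {X : Type*} [TopologicalSpace X] {D : C(X, ℂ) →ₗ[ℂ] ℂ} {x y : X}

lemma apply_const (hD : IsDiamNorming D x y) (c : ℂ) : D (ContinuousMap.const X c) = 0 := by
  have hc : diam (range (ContinuousMap.const X c)) = 0 :=
    diam_subsingleton (by rintro _ ⟨a, rfl⟩ _ ⟨b, rfl⟩; rfl)
  exact norm_le_zero_iff.1 (hc ▸ hD.norm_le _)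

lemma norm_apply_eq_two [CompactSpace X] (hD : IsDiamNorming D x y) {f : C(X, ℂ)}
    (hfx : f x = 1) (hfy : f y = -1) (hf : ∀ a, ‖f a‖ ≤ 1) : ‖D f‖ = 2 := by
  have hxy : ‖f x - f y‖ = 2 := by rw [hfx, hfy]; norm_num
  have hdiam : diam (range f) = 2 :=
    le_antisymm (by simpa using diam_range_le_of_norm_le f zero_le_one hf)
      (hxy ▸ norm_sub_le_diam_range f x y)
  rw [hD.norm_eq f (hxy.trans hdiam.symm), hdiam]

/-- Perturbing a function peaking at `x, y` by `±h`, with `h` small near `x` and `y`, barely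
increases its diameter, while `‖D f‖` is already maximal; the parallelogram law then forces
`D h` to be small. -/
lemma apply_eq_zero_of_norm_le_one [CompactSpace X] [T2Space X] (hD : IsDiamNorming D x y)
    (hxy : x ≠ y) {h : C(X, ℂ)} (hx : h x = 0) (hy : h y = 0) (hh : ‖h‖ ≤ 1) : D h = 0 := by
  have small : ∀ ε > 0, ‖D h‖ ^ 2 ≤ 8 * ε + 4 * ε ^ 2 := by
    intro ε hε
    obtain ⟨f, hfx, hfy, hf, hfW⟩ := exists_dipole hxy (W := {a | ‖h a‖ < ε})
      (isOpen_lt (by fun_prop) continuous_const) (by simpa [hx]) (by simpa [hy])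
    have perturb : ∀ s : ℂ, ‖s‖ ≤ 1 → ‖D f + s * D h‖ ≤ 2 + 2 * ε := by
      intro s hs
      have hbound : ∀ a, ‖(f + s • h) a‖ ≤ 1 + ε := by
        intro a
        have hsh : ‖s * h a‖ ≤ ‖h a‖ := by
          rw [norm_mul]; exact mul_le_of_le_one_left (norm_nonneg _) hs
        by_cases ha : ‖h a‖ < ε
        · calc ‖f a + s * h a‖ ≤ ‖f a‖ + ‖s * h a‖ := norm_add_le _ _
            _ ≤ 1 + ε := by linarith [hf a]
        · calc ‖f a + s * h a‖ = ‖s * h a‖ := by rw [hfW a ha, zero_add]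
            _ ≤ 1 + ε := by linarith [h.norm_coe_le_norm a]
      calc ‖D f + s * D h‖ = ‖D (f + s • h)‖ := by rw [map_add, map_smul, smul_eq_mul]
        _ ≤ diam (range (f + s • h)) := hD.norm_le _
        _ ≤ 2 * (1 + ε) := diam_range_le_of_norm_le _ (by positivity) hbound
        _ = 2 + 2 * ε := by ring
    have hDf := hD.norm_apply_eq_two hfx hfy hf
    have hplus := perturb 1 (by simp)
    have hminus := perturb (-1) (by simp)
    have hpar := parallelogram_law_with_norm ℝ (D f) (D h)
    simp only [one_mul, neg_one_mul, ← sub_eq_add_neg] at hplus hminus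
    nlinarith [norm_nonneg (D f + D h), norm_nonneg (D f - D h)]
  by_contra hne
  have hpos : 0 < ‖D h‖ ^ 2 := by positivity
  have hε : 0 < min 1 (‖D h‖ ^ 2 / 24) := lt_min one_pos (by positivity)
  nlinarith [small _ hε, min_le_left 1 (‖D h‖ ^ 2 / 24), min_le_right 1 (‖D h‖ ^ 2 / 24)]

lemma apply_eq_zero [CompactSpace X] [T2Space X] (hD : IsDiamNorming D x y) (hxy : x ≠ y)
    {h : C(X, ℂ)} (hx : h x = 0) (hy : h y = 0) : D h = 0 := by
  set c : ℂ := Complex.ofReal (‖h‖ + 1)⁻¹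
  have hc : c ≠ 0 := Complex.ofReal_ne_zero.2 (by positivity)
  have hch : ‖c • h‖ ≤ 1 := by
    rw [norm_smul, Complex.norm_real, norm_inv, Real.norm_eq_abs, abs_of_pos (by positivity),
      inv_mul_le_one₀ (by positivity)]
    linarith
  have := hD.apply_eq_zero_of_norm_le_one hxy (h := c • h) (by simp [hx]) (by simp [hy]) hch
  rwa [map_smul, smul_eq_mul, mul_eq_zero, or_iff_right hc] at this

theorem exists_eq_mul_sub [CompactSpace X] [T2Space X] (hD : IsDiamNorming D x y)
    (hxy : x ≠ y) : ∃ α : ℂ, ‖α‖ = 1 ∧ ∀ f, D f = α * (f x - f y) := by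
  obtain ⟨e, hex, hey, he, -⟩ := exists_dipole hxy isOpen_univ (mem_univ x) (mem_univ y)
  refine ⟨D e / 2, by simp [hD.norm_apply_eq_two hex hey he], fun f => ?_⟩
  have hzero := hD.apply_eq_zero hxy
    (h := f - ((f x - f y) / 2) • e - ContinuousMap.const X ((f x + f y) / 2))
    (by simp only [ContinuousMap.sub_apply, ContinuousMap.coe_smul, Pi.smul_apply, hex,
      smul_eq_mul, mul_one, ContinuousMap.const_apply]; ring)
    (by simp only [ContinuousMap.sub_apply, ContinuousMap.coe_smul, Pi.smul_apply, hey,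
      smul_eq_mul, mul_neg, mul_one, sub_neg_eq_add, ContinuousMap.const_apply]; ring)
  rw [map_sub, map_sub, map_smul, hD.apply_const, smul_eq_mul] at hzero
  linear_combination hzero

end IsDiamNorming

namespace TwoSet

variable {Y : Type*}

def pair {x y : Y} (h : x ≠ y) : TwoSet Y := ⟨{x, y}, x, y, h, rfl⟩

lemma pair_comm {x y : Y} (h : x ≠ y) : pair h.symm = pair h :=
  Subtype.ext (Set.pair_comm y x)

lemma pair_ne_pair {x y z w : Y} (hxy : x ≠ y) (hzw : z ≠ w)
    (h : ({x, y} : Set Y) ≠ {z, w}) : pair hxy ≠ pair hzw :=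
  fun e => h (congrArg Subtype.val e)

lemma eq_pair_of_mem (s : TwoSet Y) {a b : Y} (hab : a ≠ b) (ha : a ∈ s.val) (hb : b ∈ s.val) :
    s.val = {a, b} := by
  obtain ⟨c, d, -, hs⟩ := s.property
  rw [hs] at ha hb ⊢
  rw [Set.pair_eq_pair_iff]
  simp only [mem_insert_iff, mem_singleton_iff] at ha hb
  grind

lemma exists_mem_ne (s : TwoSet Y) (c : Y) : ∃ a ∈ s.val, a ≠ c := by
  obtain ⟨a, b, hab, hs⟩ := s.property
  rw [hs]
  by_cases hac : a = c
  · exact ⟨b, by simp, hac ▸ hab.symm⟩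
  · exact ⟨a, by simp, hac⟩

lemma eq_of_subset {s t : TwoSet Y} (h : s.val ⊆ t.val) : s = t := by
  obtain ⟨a, b, hab, hs⟩ := s.property
  rw [hs, pair_subset_iff] at h
  exact Subtype.ext (hs.trans (t.eq_pair_of_mem hab h.1 h.2).symm)

end TwoSet

open TwoSet

def IsTriangle {Y : Type*} (A B C : TwoSet Y) : Prop :=
  ∃ P Q R : Y, P ≠ Q ∧ P ≠ R ∧ Q ≠ R ∧ A.val = {P, Q} ∧ B.val = {P, R} ∧ C.val = {Q, R}

namespace IsTriangle

variable {Y : Type*} {A B C : TwoSet Y} {u v : Y}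

lemma swap (hT : IsTriangle A B C) : IsTriangle B A C := by
  obtain ⟨P, Q, R, hPQ, hPR, hQR, hA, hB, hC⟩ := hT
  exact ⟨P, R, Q, hPR, hPQ, hQR.symm, hB, hA, hC.trans (Set.pair_comm Q R)⟩

lemma exists_mem_mem (hT : IsTriangle A B C) : ∃ v, v ∈ A.val ∧ v ∈ B.val := by
  obtain ⟨P, Q, R, -, -, -, hA, hB, -⟩ := hT
  exact ⟨P, by simp [hA], by simp [hB]⟩

lemma eq_of_mem_of_mem (hT : IsTriangle A B C) (huA : u ∈ A.val) (huB : u ∈ B.val)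
    (hvA : v ∈ A.val) (hvB : v ∈ B.val) : u = v := by
  obtain ⟨P, Q, R, hPQ, hPR, hQR, hA, hB, -⟩ := hT
  simp only [hA, hB, mem_insert_iff, mem_singleton_iff] at huA huB hvA hvB
  grind

lemma notMem_of_mem_of_mem (hT : IsTriangle A B C) (hA : v ∈ A.val) (hB : v ∈ B.val) :
    v ∉ C.val := by
  obtain ⟨P, Q, R, hPQ, hPR, hQR, hA', hB', hC'⟩ := hT
  simp only [hA', hB', hC', mem_insert_iff, mem_singleton_iff] at hA hB ⊢
  grind

lemma mem_of_mem_of_ne (hT : IsTriangle A B C) (hvA : v ∈ A.val) (hvB : v ∈ B.val)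
    (huA : u ∈ A.val) (huv : u ≠ v) : u ∈ C.val := by
  obtain ⟨P, Q, R, hPQ, hPR, hQR, hA, hB, hC⟩ := hT
  simp only [hA, hB, hC, mem_insert_iff, mem_singleton_iff] at hvA hvB huA ⊢
  grind

end IsTriangle

theorem isTriangle_of_subset_union {Y : Type*} {A B C : TwoSet Y}
    (hAB : A ≠ B) (hAC : A ≠ C) (hA : A.val ⊆ B.val ∪ C.val) (hB : B.val ⊆ A.val ∪ C.val) :
    IsTriangle A B C := by
  have meet : ∀ {S T U : TwoSet Y}, S ≠ U → S.val ⊆ T.val ∪ U.val →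
      ∃ a, a ∈ S.val ∧ a ∈ T.val := by
    intro S T U hSU hS
    by_contra! h
    exact hSU (eq_of_subset fun a ha => (hS ha).resolve_left (h a ha))
  have no_common : ∀ a, a ∈ A.val → a ∈ B.val → a ∉ C.val := by
    intro a haA haB haC
    obtain ⟨b, hbA, hba⟩ := A.exists_mem_ne a
    have hA' := A.eq_pair_of_mem hba.symm haA hbA
    rcases hA hbA with hbB | hbC
    · exact hAB (Subtype.ext (hA'.trans (B.eq_pair_of_mem hba.symm haB hbB).symm))
    · exact hAC (Subtype.ext (hA'.trans (C.eq_pair_of_mem hba.symm haC hbC).symm))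
  obtain ⟨P, hPA, hPB⟩ := meet hAC hA
  obtain ⟨Q, hQA, hQC⟩ := meet hAB (union_comm B.val C.val ▸ hA)
  obtain ⟨R, hRB, hRC⟩ := meet hAB.symm (union_comm A.val C.val ▸ hB)
  have hPQ : P ≠ Q := by rintro rfl; exact no_common P hPA hPB hQC
  have hPR : P ≠ R := by rintro rfl; exact no_common P hPA hPB hRC
  have hQR : Q ≠ R := by rintro rfl; exact no_common Q hQA hRB hQC
  exact ⟨P, Q, R, hPQ, hPR, hQR, A.eq_pair_of_mem hPQ hPA hQA, B.eq_pair_of_mem hPR hPB hRB,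
    C.eq_pair_of_mem hQR hQC hRC⟩

lemma exists_ne_ne_of_three {X : Type*} (h3 : ∃ a b c : X, a ≠ b ∧ a ≠ c ∧ b ≠ c) (u v : X) :
    ∃ w, w ≠ u ∧ w ≠ v := by
  obtain ⟨a, b, c, hab, hac, hbc⟩ := h3
  by_contra! h
  have huv : ∀ w, w = u ∨ w = v := fun w => (eq_or_ne w u).imp_right (h w)
  rcases huv a with rfl | rfl <;> rcases huv b with rfl | rfl <;> rcases huv c with rfl | rfl <;>
    simp_all

section Star

variable {X Y : Type*} {F : TwoSet X → TwoSet Y}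

def IsTriangular (F : TwoSet X → TwoSet Y) : Prop :=
  ∀ ⦃x y z : X⦄ (hxy : x ≠ y) (hxz : x ≠ z) (hyz : y ≠ z),
    IsTriangle (F (pair hxy)) (F (pair hxz)) (F (pair hyz))

def IsStarCenter (F : TwoSet X → TwoSet Y) (x : X) (v : Y) : Prop :=
  ∀ y (h : x ≠ y), v ∈ (F (pair h)).val

namespace IsTriangular

/-- If `F {x,w}` missed the common point `v` of `F {x,y}` and `F {x,z}`, the common points of
`F {x,w}` with these two would both lie in `F {y,z}`, forcing `F {x,w} = F {y,z}`. -/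
lemma mem_of_mem_of_mem (htri : IsTriangular F) (hF : Function.Injective F) {x y z w : X}
    {v : Y} (hxy : x ≠ y) (hxz : x ≠ z) (hxw : x ≠ w) (hyz : y ≠ z) (hyw : y ≠ w) (hzw : z ≠ w)
    (hy : v ∈ (F (pair hxy)).val) (hz : v ∈ (F (pair hxz)).val) : v ∈ (F (pair hxw)).val := by
  by_contra hw
  obtain ⟨P, hPy, hPw⟩ := (htri hxy hxw hyw).exists_mem_mem
  obtain ⟨Q, hQz, hQw⟩ := (htri hxz hxw hzw).exists_mem_mem
  have hT := htri hxy hxz hyz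
  have hP : P ∈ (F (pair hyz)).val :=
    hT.mem_of_mem_of_ne hy hz hPy (by rintro rfl; exact hw hPw)
  have hQ : Q ∈ (F (pair hyz)).val :=
    hT.swap.mem_of_mem_of_ne hz hy hQz (by rintro rfl; exact hw hQw)
  have hPQ : P ≠ Q := by rintro rfl; exact hT.notMem_of_mem_of_mem hPy hQz hP
  have hFeq : F (pair hxw) = F (pair hyz) := Subtype.ext <|
    ((F _).eq_pair_of_mem hPQ hPw hQw).trans ((F _).eq_pair_of_mem hPQ hP hQ).symm
  have := congrArg Subtype.val (hF hFeq)
  simp only [pair, Set.pair_eq_pair_iff] at this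
  tauto

lemma exists_isStarCenter (htri : IsTriangular F) (hF : Function.Injective F)
    (h3 : ∀ u v : X, ∃ w, w ≠ u ∧ w ≠ v) (x : X) : ∃ v, IsStarCenter F x v := by
  obtain ⟨y₀, hy₀, -⟩ := h3 x x
  obtain ⟨z₀, hz₀, hz₀y₀⟩ := h3 x y₀
  obtain ⟨v, hvy, hvz⟩ := (htri hy₀.symm hz₀.symm hz₀y₀.symm).exists_mem_mem
  refine ⟨v, fun y hxy => ?_⟩
  rcases eq_or_ne y y₀ with rfl | hyy₀
  · exact hvy
  rcases eq_or_ne y z₀ with rfl | hyz₀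
  · exact hvz
  exact htri.mem_of_mem_of_mem hF _ _ _ hz₀y₀.symm hyy₀.symm hyz₀.symm hvy hvz

lemma eq_of_isStarCenter (htri : IsTriangular F) (h3 : ∀ u v : X, ∃ w, w ≠ u ∧ w ≠ v)
    {x : X} {v w : Y} (hv : IsStarCenter F x v) (hw : IsStarCenter F x w) : v = w := by
  obtain ⟨y, hy, -⟩ := h3 x x
  obtain ⟨z, hz, hzy⟩ := h3 x y
  exact (htri hy.symm hz.symm hzy.symm).eq_of_mem_of_mem (hv _ _) (hv _ _) (hw _ _) (hw _ _)

lemma ne_of_isStarCenter (htri : IsTriangular F) (h3 : ∀ u v : X, ∃ w, w ≠ u ∧ w ≠ v)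
    {x y : X} (hxy : x ≠ y) {v w : Y} (hv : IsStarCenter F x v) (hw : IsStarCenter F y w) :
    v ≠ w := by
  obtain ⟨z, hzx, hzy⟩ := h3 x y
  rintro rfl
  exact (htri hxy hzx.symm hzy.symm).notMem_of_mem_of_mem (hv _ _) (hv _ _) (hw _ _)

theorem exists_bijective (htri : IsTriangular F) (hF : Function.Bijective F)
    (h3 : ∃ a b c : X, a ≠ b ∧ a ≠ c ∧ b ≠ c) :
    ∃ g : X → Y, Function.Bijective g ∧
      (∀ x y (h : x ≠ y), (F (pair h)).val = {g x, g y}) ∧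
      ∀ x, IsStarCenter F x (g x) ∧ ∀ v, IsStarCenter F x v → v = g x := by
  have h3' := exists_ne_ne_of_three h3
  choose g hg using htri.exists_isStarCenter hF.1 h3'
  have hne : ∀ {x y}, x ≠ y → g x ≠ g y := fun hxy =>
    htri.ne_of_isStarCenter h3' hxy (hg _) (hg _)
  have hpair : ∀ x y (h : x ≠ y), (F (pair h)).val = {g x, g y} := fun x y h =>
    (F (pair h)).eq_pair_of_mem (hne h) (hg x y h) (TwoSet.pair_comm h ▸ hg y x h.symm)
  refine ⟨g, ⟨fun x y => not_imp_not.1 hne, fun v => ?_⟩, hpair,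
    fun x => ⟨hg x, fun v hv => htri.eq_of_isStarCenter h3' hv (hg x)⟩⟩
  obtain ⟨a, b, -, hab, -⟩ := h3
  obtain ⟨u, -, huv⟩ := (F (pair hab)).exists_mem_ne v
  obtain ⟨⟨s, x, y, hxy, rfl⟩, hs⟩ := hF.2 (pair huv.symm)
  have hv : v ∈ (F (pair hxy)).val := by
    change v ∈ (F ⟨_, x, y, hxy, rfl⟩).val
    rw [hs]
    simp [pair]
  rw [hpair] at hv
  rcases hv with hv | hv
  · exact ⟨x, hv.symm⟩
  · exact ⟨y, hv.symm⟩

end IsTriangular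

end Star

section DiameterPreserving

variable {X : Type*} [TopologicalSpace X] [CompactSpace X] [T2Space X]
  {φ : C(X, ℂ) →ₗ[ℂ] C(X, ℂ)} {G' : TwoSet X → TwoSet X}

theorem exists_sub_eq_mul_sub_of_mem_Gset (hdp : DiamPreserving φ) {x y p q : X}
    (hxy : x ≠ y) (hpq : {p, q} ∈ Gset φ {x, y}) :
    ∃ τ : ℂ, ‖τ‖ = 1 ∧ ∀ h, φ h p - φ h q = τ * (h x - h y) := by
  let D : C(X, ℂ) →ₗ[ℂ] ℂ :=
    ((ContinuousMap.evalCLM ℂ p).toLinearMap - (ContinuousMap.evalCLM ℂ q).toLinearMap) ∘ₗ φ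
  have hD : ∀ f, D f = φ f p - φ f q := fun f => rfl
  have hnorming : IsDiamNorming D x y := by
    refine ⟨fun f => ?_, fun f hf => ?_⟩
    · rw [hD, ← hdp f]
      exact norm_sub_le_diam_range _ p q
    · obtain ⟨p', q', -, hpair, hdiam⟩ := hpq f ⟨x, y, hxy, rfl, hf⟩
      rw [hD, ← hdp f, ← hdiam]
      rcases pair_eq_pair_iff.1 hpair with ⟨rfl, rfl⟩ | ⟨rfl, rfl⟩
      · rfl
      · exact norm_sub_rev _ _
  exact hnorming.exists_eq_mul_sub hxy

/-- A point of `G'({x, y})` outside the other two images would be isolated by a bump function,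
contradicting the linear relation between the three image dipoles. -/
lemma subset_union_of_surjective (hdp : DiamPreserving φ) (hsurj : Function.Surjective φ)
    (hG : ∀ s, (G' s).val ∈ Gset φ s.val) {x y z : X} (hxy : x ≠ y) (hxz : x ≠ z)
    (hyz : y ≠ z) : (G' (pair hxy)).val ⊆ (G' (pair hxz)).val ∪ (G' (pair hyz)).val := by
  intro a ha
  obtain ⟨b, hb, hba⟩ := (G' (pair hxy)).exists_mem_ne a
  obtain ⟨r, w, -, hrw⟩ := (G' (pair hxz)).property
  obtain ⟨m, n, -, hmn⟩ := (G' (pair hyz)).property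
  obtain ⟨τ₁, -, h₁⟩ := exists_sub_eq_mul_sub_of_mem_Gset hdp hxy
    ((G' (pair hxy)).eq_pair_of_mem hba.symm ha hb ▸ hG (pair hxy))
  obtain ⟨τ₂, hτ₂, h₂⟩ := exists_sub_eq_mul_sub_of_mem_Gset hdp hxz (hrw ▸ hG (pair hxz))
  obtain ⟨τ₃, hτ₃, h₃⟩ := exists_sub_eq_mul_sub_of_mem_Gset hdp hyz (hmn ▸ hG (pair hyz))
  have key : ∀ H : C(X, ℂ),
      τ₂ * τ₃ * (H a - H b) + -(τ₁ * τ₃) * (H r - H w) + τ₁ * τ₂ * (H m - H n) = 0 := by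
    intro H
    obtain ⟨h, rfl⟩ := hsurj H
    linear_combination τ₂ * τ₃ * h₁ h - τ₁ * τ₃ * h₂ h + τ₁ * τ₂ * h₃ h
  have hc : τ₂ * τ₃ ≠ 0 := by rw [← norm_ne_zero_iff, norm_mul, hτ₂, hτ₃]; norm_num
  have := mem_of_forall_dipole_combination_eq_zero hc hba.symm key
  rw [hrw, hmn]
  simp only [mem_insert_iff, mem_singleton_iff, mem_union] at this ⊢
  tauto

theorem isTriangular_of_diamPreserving (hdp : DiamPreserving φ)
    (hsurj : Function.Surjective φ) (hinj : Function.Injective G')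
    (hG : ∀ s, (G' s).val ∈ Gset φ s.val) : IsTriangular G' := by
  intro x y z hxy hxz hyz
  have hne : ∀ {a b c d : X} (hab : a ≠ b) (hcd : c ≠ d), ({a, b} : Set X) ≠ {c, d} →
      G' (pair hab) ≠ G' (pair hcd) :=
    fun hab hcd h => hinj.ne (pair_ne_pair hab hcd h)
  refine isTriangle_of_subset_union (hne _ _ ?_) (hne _ _ ?_)
    (subset_union_of_surjective hdp hsurj hG hxy hxz hyz) ?_
  · rw [Ne, Set.pair_eq_pair_iff]; tauto
  · rw [Ne, Set.pair_eq_pair_iff]; tauto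
  · have := subset_union_of_surjective hdp hsurj hG hxz hxy hyz.symm
    rwa [TwoSet.pair_comm hyz] at this

end DiameterPreserving

theorem exists_point_bijection_general
    {X : Type*} [TopologicalSpace X] [CompactSpace X] [T2Space X]
    (h3 : ∃ a b c : X, a ≠ b ∧ a ≠ c ∧ b ≠ c)
    (φ : C(X, ℂ) →ₗ[ℂ] C(X, ℂ)) (hbij : Function.Bijective φ)
    (hdp : DiamPreserving (⇑φ))
    (G' : TwoSet X → TwoSet X) (hG'bij : Function.Bijective G')
    (hG' : ∀ p : TwoSet X, Gset (⇑φ) p.val = {(G' p).val}) :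
    ∃ g : X → X, Function.Bijective g ∧
      (∀ (x y : X) (h : x ≠ y),
        (G' ⟨{x, y}, x, y, h, rfl⟩).val = {g x, g y}) ∧
      (∀ (x : X),
        (∀ (y : X) (h : x ≠ y), g x ∈ (G' ⟨{x, y}, x, y, h, rfl⟩).val) ∧
        ∀ z : X, (∀ (y : X) (h : x ≠ y), z ∈ (G' ⟨{x, y}, x, y, h, rfl⟩).val) →
          z = g x) := by
  have hG : ∀ s, (G' s).val ∈ Gset φ s.val := fun s => by rw [hG' s]; rfl
  exact (isTriangular_of_diamPreserving hdp hbij.2 hG'bij.1 hG).exists_bijective hG'bij h3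

/-- Step 7: there is a bijection `g : X → X` with `G'({x,y}) = {g(x), g(y)}` for every
two-element subset `{x,y}`; moreover, `g(x)` is the unique point lying in
`G'({x,y})` for every `y ≠ x`. -/
theorem exists_point_bijection
    {X : Type*} [TopologicalSpace X] [CompactSpace X] [T2Space X]
    [FirstCountableTopology X]
    (h3 : ∃ a b c : X, a ≠ b ∧ a ≠ c ∧ b ≠ c)
    (φ : C(X, ℂ) →ₗ[ℂ] C(X, ℂ)) (hbij : Function.Bijective φ)
    (hdp : DiamPreserving (⇑φ))
    (G' : TwoSet X → TwoSet X) (hG'bij : Function.Bijective G')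
    (hG' : ∀ p : TwoSet X, Gset (⇑φ) p.val = {(G' p).val}) :
    ∃ g : X → X, Function.Bijective g ∧
      (∀ (x y : X) (h : x ≠ y),
        (G' ⟨{x, y}, x, y, h, rfl⟩).val = {g x, g y}) ∧
      (∀ (x : X),
        (∀ (y : X) (h : x ≠ y), g x ∈ (G' ⟨{x, y}, x, y, h, rfl⟩).val) ∧
        ∀ z : X, (∀ (y : X) (h : x ≠ y), z ∈ (G' ⟨{x, y}, x, y, h, rfl⟩).val) →
          z = g x) :=
  exists_point_bijection_general h3 φ hbij hdp G' hG'bij hG'
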